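/- Suppose 0 < β < 1/(2N+1), and let t = (t_0, t_1, …, t_m) ∈ ℝ^{m+1} with 0 = t_0 < t_1 < … < t_m. If r·Γ_t ⊆ Γ_t for some real r with 0 < r < 1, then r = β^q for some q ∈ ℤ_+. -/

import Mathlib

noncomputable section

namespace HSCantor

/-- A `D`-coding of `x`: a digit sequence `c` with digits in `D ⊆ ℤ` such that
`x = (1-β)/N · Σ_{k=1}^∞ c_k β^{k-1}` (here indexed from `k = 0`). -/
def IsCoding (N : ℕ) (β : ℝ) (D : Set ℤ) (x : ℝ) (c : ℕ → ℤ) : Prop :=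
  (∀ k, c k ∈ D) ∧ x = (1 - β) / N * ∑' k : ℕ, (c k : ℝ) * β ^ k

/-- The set `Γ_{β,D}` for a digit set `D ⊆ ℤ`. -/
def cantorD (N : ℕ) (β : ℝ) (D : Set ℤ) : Set ℝ := { x | ∃ c, IsCoding N β D x c }

/-- The homogeneous symmetric Cantor set `Γ = Γ_{β,{0,1,…,N}}`. -/
def Gamma (N : ℕ) (β : ℝ) : Set ℝ := cantorD N β (Set.Icc 0 (N : ℤ))

/-- `E ⊆ ℝ` is a self-similar set: it is nonempty, compact, and is the union of its
images under finitely many contracting similitudes `x ↦ r x + b`, `0 < |r| < 1`. -/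
def IsSelfSimilar (E : Set ℝ) : Prop :=
  E.Nonempty ∧ IsCompact E ∧ ∃ F : Finset (ℝ × ℝ),
    (∀ p ∈ F, 0 < |p.1| ∧ |p.1| < 1) ∧
    E = ⋃ p ∈ F, (fun x => p.1 * x + p.2) '' E

/-- `Γ_t = ⋃_{j=0}^m (Γ + t_j)`. -/
def GammaT (N : ℕ) (β : ℝ) {m : ℕ} (t : Fin (m + 1) → ℝ) : Set ℝ :=
  ⋃ j, (fun x => x + t j) '' Gamma N β

/-- The set `T = ⋃_{n≥1} { (1-β)/N · Σ_{k=1}^n j_k β^{-k} : j_k ∈ {0,…,N} }`. -/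
def Tset (N : ℕ) (β : ℝ) : Set ℝ :=
  { x | ∃ n : ℕ, 1 ≤ n ∧ ∃ c : ℕ → ℕ, (∀ k, c k ≤ N) ∧
      x = (1 - β) / N * ∑ k ∈ Finset.Icc 1 n, (c k : ℝ) * β ^ (-(k : ℤ)) }

/-- `d` is a digit representation of the translation vector `t` with `τ` digits:
`t_j = (1-β)/N · Σ_{k=1}^τ d_{j,k} β^{-k}` with all digits in `{0,…,N}`. -/
def IsDigitRep (N : ℕ) (β : ℝ) {m : ℕ} (t : Fin (m + 1) → ℝ) (τ : ℕ)
    (d : Fin (m + 1) → ℕ → ℕ) : Prop :=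
  (∀ j k, d j k ≤ N) ∧
    ∀ j, t j = (1 - β) / N * ∑ k ∈ Finset.Icc 1 τ, (d j k : ℝ) * β ^ (-(k : ℤ))

/-- `d` is a digit representation of `t` with `τ = τ_t` digits, `τ_t` minimal. -/
def IsMinimalRep (N : ℕ) (β : ℝ) {m : ℕ} (t : Fin (m + 1) → ℝ) (τ : ℕ)
    (d : Fin (m + 1) → ℕ → ℕ) : Prop :=
  IsDigitRep N β t τ d ∧ ∀ τ' < τ, ∀ d', ¬ IsDigitRep N β t τ' d'

/-- `s_k = max_{0 ≤ j ≤ m} t_{j,k}`. -/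
def digitSup {m : ℕ} (d : Fin (m + 1) → ℕ → ℕ) (k : ℕ) : ℕ :=
  Finset.univ.sup fun j => d j k

/-- Words of length `n` over the alphabet `{0,1,…,N}`, as lists of naturals. -/
def Words (N n : ℕ) : Set (List ℕ) := { w | w.length = n ∧ ∀ x ∈ w, x ≤ N }

/-- `Ω_t^n`: words `i_1 … i_n ∈ {0,…,N}^n` with `i_{n+1-k} ≤ N - s_k` for `1 ≤ k ≤ τ`.
(A list `w = [i_1, …, i_n]` satisfies `i_{n+1-k} = w.getD (n-k) 0`.) -/
def Omega (N τ : ℕ) (s : ℕ → ℕ) (n : ℕ) : Set (List ℕ) :=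
  { w | w ∈ Words N n ∧ ∀ k, 1 ≤ k → k ≤ τ → w.getD (n - k) 0 + s k ≤ N }

/-- `Ω̂_t^n`: words `i_1 … i_n ∈ {0,…,N}^n` with `i_{n+1-k} ≥ s_k` for `1 ≤ k ≤ τ`. -/
def OmegaHat (N τ : ℕ) (s : ℕ → ℕ) (n : ℕ) : Set (List ℕ) :=
  { w | w ∈ Words N n ∧ ∀ k, 1 ≤ k → k ≤ τ → s k ≤ w.getD (n - k) 0 }

/-- `W_t^τ = A_t^τ ∪ Â_t^τ`: words obtained from a word in `Ω_t^τ` (resp. `Ω̂_t^τ`)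
by adding (resp. subtracting) the digits of some `t_j` to the last `τ` positions. -/
def Wset (N : ℕ) {m : ℕ} (τ : ℕ) (d : Fin (m + 1) → ℕ → ℕ) : Set (List ℕ) :=
  { v | ∃ w ∈ Omega N τ (digitSup d) τ, ∃ j : Fin (m + 1),
      v = List.ofFn fun idx : Fin τ => w.getD idx 0 + d j (τ - (idx : ℕ)) } ∪
  { v | ∃ w ∈ OmegaHat N τ (digitSup d) τ, ∃ j : Fin (m + 1),
      v = List.ofFn fun idx : Fin τ => w.getD idx 0 - d j (τ - (idx : ℕ)) }

/-- The symbolic admissibility condition: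
`⋃_{n=τ}^ℓ {0,…,N}^{n-τ} × W_t^τ × {0,…,N}^{ℓ-n} = {0,…,N}^ℓ` for some `ℓ ≥ τ`. -/
def AdmissibleWith (N : ℕ) {m : ℕ} (τ : ℕ) (d : Fin (m + 1) → ℕ → ℕ) : Prop :=
  ∃ ℓ, τ ≤ ℓ ∧
    (⋃ n ∈ Finset.Icc τ ℓ,
      { z : List ℕ | ∃ u ∈ Words N (n - τ), ∃ w ∈ Wset N τ d, ∃ v ∈ Words N (ℓ - n),
          z = u ++ w ++ v }) = Words N ℓ

/-- `t` is an admissible translation vector. -/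
def IsAdmissible (N : ℕ) (β : ℝ) {m : ℕ} (t : Fin (m + 1) → ℝ) : Prop :=
  (∀ j, t j ∈ Tset N β) ∧
    ∃ τ d, IsMinimalRep N β t τ d ∧ AdmissibleWith N τ d

/-- The vertex set `V_t = {0,…,N}^τ \ W_t^τ` of the directed graph `G_t`. -/
def Vset (N : ℕ) {m : ℕ} (τ : ℕ) (d : Fin (m + 1) → ℕ → ℕ) : Set (List ℕ) :=
  Words N τ \ Wset N τ d

/-- The graph on `V` with an edge `i → j` iff `i_2 … i_τ = j_1 … j_{τ-1}` has a cycle: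
a directed path of positive length starting and ending at the same vertex. -/
def HasCycle (V : Set (List ℕ)) : Prop :=
  ∃ (L : ℕ) (p : ℕ → List ℕ), 0 < L ∧ (∀ i ≤ L, p i ∈ V) ∧
    (∀ i < L, (p i).drop 1 = (p (i + 1)).dropLast) ∧ p 0 = p L

open Classical in
/-- The adjacency matrix of the directed graph `G_t`, indexed by all words of length `τ`
over `{0,…,N}`; its `(i,j)` entry is `1` exactly when `i, j ∈ V_t` and there is a
directed edge `i → j`, and the rows and columns outside `V_t` are zero. -/
def adjMat (N τ : ℕ) (V : Set (List ℕ)) :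
    Matrix (Fin τ → Fin (N + 1)) (Fin τ → Fin (N + 1)) ℕ :=
  fun i j =>
    if (List.ofFn fun k => (i k : ℕ)) ∈ V ∧ (List.ofFn fun k => (j k : ℕ)) ∈ V ∧
        (List.ofFn fun k => (i k : ℕ)).drop 1 = (List.ofFn fun k => (j k : ℕ)).dropLast
    then 1 else 0

/-- `φ_i(x) = βx + i(1-β)/N`. -/
def phi (N : ℕ) (β : ℝ) (i : ℕ) (x : ℝ) : ℝ := β * x + i * (1 - β) / N

/-- `φ_{i_1 … i_n} = φ_{i_1} ∘ ⋯ ∘ φ_{i_n}`. -/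
def phiWord (N : ℕ) (β : ℝ) (w : List ℕ) (x : ℝ) : ℝ := w.foldr (phi N β) x

/-- The conjugate translation vector `t̂_j = t_m - t_{m-j}`. -/
def conj {m : ℕ} (t : Fin (m + 1) → ℝ) : Fin (m + 1) → ℝ :=
  fun j => t (Fin.last m) - t ⟨m - (j : ℕ), Nat.lt_succ_of_le (Nat.sub_le m j)⟩

section Aux

variable {N : ℕ} {β : ℝ}

lemma summable_digits (hβ0 : 0 < β) (hβ1 : β < 1) (c : ℕ → ℤ)
    (hc : ∀ k, c k ∈ Set.Icc 0 (N : ℤ)) :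
    Summable (fun k : ℕ => (c k : ℝ) * β ^ k) := by
  apply Summable.of_nonneg_of_le (fun k => ?_) (fun k => ?_)
    ((summable_geometric_of_lt_one hβ0.le hβ1).mul_left (N : ℝ))
  · have h0 : (0 : ℝ) ≤ (c k : ℝ) := by exact_mod_cast (hc k).1
    positivity
  · have h1 : (c k : ℝ) ≤ N := by exact_mod_cast (hc k).2
    have h2 := pow_nonneg hβ0.le k
    nlinarith

lemma tsum_digits_nonneg (hβ0 : 0 < β) (c : ℕ → ℤ)
    (hc : ∀ k, c k ∈ Set.Icc 0 (N : ℤ)) :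
    0 ≤ ∑' k : ℕ, (c k : ℝ) * β ^ k := by
  apply tsum_nonneg
  intro k
  have h0 : (0 : ℝ) ≤ (c k : ℝ) := by exact_mod_cast (hc k).1
  positivity

lemma tsum_geom (hβ0 : 0 < β) (hβ1 : β < 1) :
    ∑' k : ℕ, (N : ℝ) * β ^ k = N / (1 - β) := by
  rw [tsum_mul_left, tsum_geometric_of_lt_one hβ0.le hβ1]
  rw [div_eq_mul_inv]

lemma tsum_digits_le (hβ0 : 0 < β) (hβ1 : β < 1) (c : ℕ → ℤ)
    (hc : ∀ k, c k ∈ Set.Icc 0 (N : ℤ)) :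
    ∑' k : ℕ, (c k : ℝ) * β ^ k ≤ N / (1 - β) := by
  rw [← tsum_geom hβ0 hβ1]
  apply Summable.tsum_le_tsum (fun k => ?_) (summable_digits hβ0 hβ1 c hc)
    ((summable_geometric_of_lt_one hβ0.le hβ1).mul_left (N : ℝ))
  have h1 : (c k : ℝ) ≤ N := by exact_mod_cast (hc k).2
  have h2 := pow_nonneg hβ0.le k
  nlinarith

lemma mem_Gamma_iff {x : ℝ} :
    x ∈ Gamma N β ↔ ∃ c : ℕ → ℤ, (∀ k, c k ∈ Set.Icc 0 (N : ℤ)) ∧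
      x = (1 - β) / N * ∑' k : ℕ, (c k : ℝ) * β ^ k := Iff.rfl

lemma one_mem_Gamma (hN : 0 < N) (hβ0 : 0 < β) (hβ1 : β < 1) : (1 : ℝ) ∈ Gamma N β := by
  refine ⟨fun _ => (N : ℤ), fun k => ⟨Int.natCast_nonneg N, le_refl _⟩, ?_⟩
  push_cast
  rw [tsum_geom hβ0 hβ1]
  have hbne : (1 : ℝ) - β ≠ 0 := by linarith
  have hNne : (N : ℝ) ≠ 0 := by exact_mod_cast hN.ne'
  field_simp

lemma Gamma_nonneg (hN : 0 < N) (hβ0 : 0 < β) (hβ1 : β < 1) {x : ℝ}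
    (hx : x ∈ Gamma N β) : 0 ≤ x := by
  obtain ⟨c, hc, rfl⟩ := hx
  have h1 := tsum_digits_nonneg hβ0 c hc
  have h2 : 0 ≤ (1 - β) / N := by
    have : (0:ℝ) < N := by exact_mod_cast hN
    have : (0:ℝ) ≤ 1 - β := by linarith
    positivity
  positivity

lemma Gamma_le_one (hN : 0 < N) (hβ0 : 0 < β) (hβ1 : β < 1) {x : ℝ}
    (hx : x ∈ Gamma N β) : x ≤ 1 := by
  obtain ⟨c, hc, rfl⟩ := hx
  have h1 := tsum_digits_le hβ0 hβ1 c hc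
  have hNpos : (0:ℝ) < N := by exact_mod_cast hN
  have h2 : (0:ℝ) < (1 - β) / N := by
    have : (0:ℝ) < 1 - β := by linarith
    positivity
  calc (1 - β) / N * ∑' k : ℕ, (c k : ℝ) * β ^ k
      ≤ (1 - β) / N * ((N:ℝ) / (1 - β)) := by nlinarith
    _ = 1 := by
        have hbne : (1:ℝ) - β ≠ 0 := by linarith
        field_simp

/-- Prepending a digit `i ≤ N`: if `x ∈ Γ` then `i·δ + β·x ∈ Γ`. -/
lemma prepend_mem_Gamma (hN : 0 < N) (hβ0 : 0 < β) (hβ1 : β < 1) {x : ℝ}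
    (hx : x ∈ Gamma N β) {i : ℕ} (hi : i ≤ N) :
    (i : ℝ) * ((1 - β) / N) + β * x ∈ Gamma N β := by
  obtain ⟨c, hc, rfl⟩ := hx
  refine ⟨fun k => if k = 0 then (i : ℤ) else c (k - 1), fun k => ?_, ?_⟩
  · dsimp only
    split
    · exact ⟨by positivity, by exact_mod_cast hi⟩
    · exact hc _
  · have hsum : Summable (fun k : ℕ =>
        ((if k = 0 then (i : ℤ) else c (k - 1) : ℤ) : ℝ) * β ^ k) := by
      apply summable_digits hβ0 hβ1
      intro k
      split
      · exact ⟨by positivity, by exact_mod_cast hi⟩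
      · exact hc _
    rw [Summable.tsum_eq_zero_add hsum]
    have hshift2 : ∑' k : ℕ,
        ((if k + 1 = 0 then (i : ℤ) else c (k + 1 - 1) : ℤ) : ℝ) * β ^ (k + 1)
        = (∑' k : ℕ, (c k : ℝ) * β ^ k) * β := by
      rw [← tsum_mul_right]
      apply tsum_congr
      intro k
      simp only [Nat.succ_ne_zero, if_false, Nat.add_sub_cancel]
      ring
    rw [hshift2]
    simp only [if_true, pow_zero, mul_one]
    push_cast
    ring

/-- First-digit extraction: if `x ∈ Γ` and `x < δ` then `x = β y` with `y ∈ Γ`. -/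
lemma Gamma_small (hN : 0 < N) (hβ0 : 0 < β) (hβ1 : β < 1) {x : ℝ}
    (hx : x ∈ Gamma N β) (hxs : x < (1 - β) / N) :
    ∃ y ∈ Gamma N β, x = β * y := by
  obtain ⟨c, hc, rfl⟩ := hx
  have hNpos : (0:ℝ) < N := by exact_mod_cast hN
  have hδ : (0:ℝ) < (1 - β) / N := by
    have : (0:ℝ) < 1 - β := by linarith
    positivity
  have hsum := summable_digits hβ0 hβ1 c hc
  have hshift : ∀ k, c (k + 1) ∈ Set.Icc 0 (N : ℤ) := fun k => hc (k + 1)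
  have hsum' := summable_digits hβ0 hβ1 (fun k => c (k + 1)) hshift
  have htail : ∑' k : ℕ, (c (k + 1) : ℝ) * β ^ (k + 1)
      = (∑' k : ℕ, (c (k + 1) : ℝ) * β ^ k) * β := by
    rw [← tsum_mul_right]
    congr 1; ext k; ring
  have hdecomp : ∑' k : ℕ, (c k : ℝ) * β ^ k
      = (c 0 : ℝ) + (∑' k : ℕ, (c (k + 1) : ℝ) * β ^ k) * β := by
    rw [Summable.tsum_eq_zero_add hsum]
    simp only [pow_zero, mul_one]
    rw [htail]
  have htail_nonneg : 0 ≤ ∑' k : ℕ, (c (k + 1) : ℝ) * β ^ k :=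
    tsum_digits_nonneg hβ0 (fun k => c (k + 1)) hshift
  -- c 0 = 0
  have hc0 : c 0 = 0 := by
    by_contra h0
    have h1 : (1 : ℤ) ≤ c 0 := lt_of_le_of_ne (hc 0).1 (Ne.symm h0)
    have h1' : (1 : ℝ) ≤ (c 0 : ℝ) := by exact_mod_cast h1
    have hA : (1 - β) / N * 1 ≤ (1 - β) / N * (c 0 : ℝ) :=
      mul_le_mul_of_nonneg_left h1' hδ.le
    have hB : 0 ≤ (1 - β) / N * ((∑' k : ℕ, (c (k + 1) : ℝ) * β ^ k) * β) :=
      mul_nonneg hδ.le (mul_nonneg htail_nonneg hβ0.le)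
    have : (1 - β) / N ≤ (1 - β) / N * ∑' k : ℕ, (c k : ℝ) * β ^ k := by
      rw [hdecomp]
      nlinarith
    linarith
  refine ⟨(1 - β) / N * ∑' k : ℕ, (c (k + 1) : ℝ) * β ^ k,
    ⟨fun k => c (k + 1), hshift, rfl⟩, ?_⟩
  rw [hdecomp, hc0]
  push_cast
  ring

/-- The gap: if `x ∈ Γ` and `x < δ` then `x ≤ β`. -/
lemma Gamma_gap (hN : 0 < N) (hβ0 : 0 < β) (hβ1 : β < 1) {x : ℝ}
    (hx : x ∈ Gamma N β) (hxs : x < (1 - β) / N) : x ≤ β := by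
  obtain ⟨y, hy, rfl⟩ := Gamma_small hN hβ0 hβ1 hx hxs
  have := Gamma_le_one hN hβ0 hβ1 hy
  nlinarith

/-- Division by powers of `β`. -/
lemma Gamma_div_pow (hN : 0 < N) (hβ0 : 0 < β) (hβ' : (N + 1 : ℝ) * β < 1) :
    ∀ (j : ℕ) (x : ℝ), x ∈ Gamma N β → x ≤ β ^ j → ∃ y ∈ Gamma N β, x = β ^ j * y := by
  have hNpos : (0:ℝ) < N := by exact_mod_cast hN
  have hβ1 : β < 1 := by nlinarith
  have hβδ : β < (1 - β) / N := by rw [lt_div_iff₀ hNpos]; nlinarith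
  intro j
  induction j with
  | zero => intro x hx _; exact ⟨x, hx, by simp⟩
  | succ j ih =>
    intro x hx hxle
    have hβj : β ^ (j + 1) ≤ β := by
      calc β ^ (j + 1) = β ^ j * β := by ring
        _ ≤ 1 * β := by nlinarith [pow_le_one₀ hβ0.le hβ1.le (n := j), pow_nonneg hβ0.le j]
        _ = β := by ring
    obtain ⟨y, hy, rfl⟩ := Gamma_small hN hβ0 hβ1 hx (lt_of_le_of_lt (le_trans hxle hβj) hβδ)
    have hyle : y ≤ β ^ j := by
      have : β * y ≤ β * β ^ j := by calc β * y ≤ β ^ (j+1) := hxle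
                                        _ = β * β ^ j := by ring
      exact le_of_mul_le_mul_left this hβ0
    obtain ⟨z, hz, rfl⟩ := ih y hy hyle
    exact ⟨z, hz, by ring⟩

/-- Density: for every `y ∈ [0,1]` and `n`, there is `x ∈ Γ` with `x ≤ y` and
`y - x < δ - β` or `y - x ≤ β^n`. -/
lemma Gamma_dense_aux (hN : 0 < N) (hβ0 : 0 < β) (hβ' : (N + 1 : ℝ) * β < 1) :
    ∀ (n : ℕ) (y : ℝ), 0 ≤ y → y ≤ 1 →
      ∃ x ∈ Gamma N β, x ≤ y ∧ (y - x < (1 - β) / N - β ∨ y - x ≤ β ^ n) := by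
  have hNpos : (0:ℝ) < N := by exact_mod_cast hN
  have hβ1 : β < 1 := by nlinarith
  set δ := (1 - β) / N with hδdef
  have hδpos : 0 < δ := by
    have : (0:ℝ) < 1 - β := by linarith
    positivity
  have hβδ : β < δ := by rw [hδdef, lt_div_iff₀ hNpos]; nlinarith
  have hNδ : (N : ℝ) * δ = 1 - β := by rw [hδdef]; field_simp
  have hzero : (0 : ℝ) ∈ Gamma N β := by
    refine ⟨fun _ => 0, fun k => ⟨le_refl _, by positivity⟩, ?_⟩
    simp
  intro n
  induction n with
  | zero =>
    intro y hy0 hy1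
    exact ⟨0, hzero, hy0, Or.inr (by simpa using hy1)⟩
  | succ n ih =>
    intro y hy0 hy1
    set i : ℕ := min N ⌊y / δ⌋₊ with hidef
    have hiN : i ≤ N := min_le_left _ _
    have hifl : i ≤ ⌊y / δ⌋₊ := min_le_right _ _
    have hile : (i : ℝ) * δ ≤ y := by
      have h1 : (i : ℝ) ≤ ⌊y / δ⌋₊ := by exact_mod_cast hifl
      have h2 : (⌊y / δ⌋₊ : ℝ) ≤ y / δ := Nat.floor_le (by positivity)
      calc (i : ℝ) * δ ≤ (y / δ) * δ := by nlinarith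
        _ = y := by field_simp
    set e : ℝ := y - i * δ with hedef
    have he0 : 0 ≤ e := by simp [hedef]; linarith
    rcases le_or_gt e β with hcase | hcase
    · -- recurse
      have hy' : 0 ≤ e / β := by positivity
      have hy1' : e / β ≤ 1 := by rw [div_le_one hβ0]; exact hcase
      obtain ⟨x', hx', hxle', hdisj⟩ := ih (e / β) hy' hy1'
      refine ⟨(i : ℝ) * δ + β * x', prepend_mem_Gamma hN hβ0 hβ1 hx' hiN, ?_, ?_⟩
      · have : β * x' ≤ β * (e / β) := by nlinarith
        have heq : β * (e / β) = e := by field_simp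
        simp only [hedef] at *
        linarith
      · have hkey : y - ((i : ℝ) * δ + β * x') = β * (e / β - x') := by
          field_simp
          ring
        rcases hdisj with hlt | hle
        · left
          rw [hkey]
          have h1 : β * (e / β - x') < β * (δ - β) := by nlinarith
          nlinarith [hδpos]
        · right
          rw [hkey]
          calc β * (e / β - x') ≤ β * β ^ n := by nlinarith
            _ = β ^ (n + 1) := by ring
    · -- e > β: take x = iδ + β
      have hflN : ⌊y / δ⌋₊ ≤ N := by
        by_contra hgt
        push_neg at hgt
        have : i = N := by
          rw [hidef]; exact min_eq_left (le_of_lt hgt)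
        have : e ≤ β := by
          rw [hedef, this]
          have : (N:ℝ) * δ = 1 - β := hNδ
          linarith
        linarith
      have hieq : i = ⌊y / δ⌋₊ := by rw [hidef]; exact min_eq_right hflN
      have heδ : e < δ := by
        have h2 : y / δ < ⌊y / δ⌋₊ + 1 := Nat.lt_floor_add_one _
        have h3 : y < ((i : ℝ) + 1) * δ := by
          rw [hieq]
          calc y = (y / δ) * δ := by field_simp
            _ < ((⌊y / δ⌋₊ : ℝ) + 1) * δ := by nlinarith
        rw [hedef]
        nlinarith
      have hmem : (i : ℝ) * δ + β * 1 ∈ Gamma N β :=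
        prepend_mem_Gamma hN hβ0 hβ1 (one_mem_Gamma hN hβ0 hβ1) hiN
      have hkey : y - ((i : ℝ) * δ + β * 1) = e - β := by rw [hedef]; ring
      refine ⟨(i : ℝ) * δ + β * 1, hmem, ?_, Or.inl ?_⟩
      · have h := hcase
        rw [hedef] at h
        linarith
      · rw [hkey]
        linarith

/-- Rigidity: if `sΓ ⊆ Γ` and `β < s ≤ 1` then `s = 1`. -/
lemma rigidity (hN : 0 < N) (hβ0 : 0 < β) (hβ' : (N + 1 : ℝ) * β < 1)
    {s : ℝ} (hs : ∀ x ∈ Gamma N β, s * x ∈ Gamma N β) (hsβ : β < s) (hs1 : s ≤ 1) :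
    s = 1 := by
  have hNpos : (0:ℝ) < N := by exact_mod_cast hN
  have hβ1 : β < 1 := by nlinarith
  set δ := (1 - β) / N with hδdef
  have hδpos : 0 < δ := by
    have : (0:ℝ) < 1 - β := by linarith
    positivity
  have hβδ : β < δ := by rw [hδdef, lt_div_iff₀ hNpos]; nlinarith
  by_contra hne
  have hslt1 : s < 1 := lt_of_le_of_ne hs1 hne
  have hspos : 0 < s := lt_trans hβ0 hsβ
  rcases lt_or_ge s δ with hsδ | hsδ
  · -- s itself lies in the gap
    have : s * 1 ∈ Gamma N β := hs 1 (one_mem_Gamma hN hβ0 hβ1)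
    rw [mul_one] at this
    have := Gamma_gap hN hβ0 hβ1 this hsδ
    linarith
  · -- s ≥ δ : density argument
    set η : ℝ := (δ - β) * (1 - s) / (2 * s) with hηdef
    have hηpos : 0 < η := by
      rw [hηdef]
      have h1 : 0 < δ - β := by linarith
      have h2 : 0 < 1 - s := by linarith
      positivity
    set y : ℝ := δ / s - η with hydef
    have hy1 : y ≤ 1 := by
      rw [hydef]
      have : δ / s ≤ 1 := by rw [div_le_one hspos]; exact hsδ
      linarith
    have hy0 : 0 ≤ y := by
      have h2 : η ≤ δ / s := by
        rw [hηdef, div_le_div_iff₀ (by linarith) hspos]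
        have e1 : (δ - β) * (1 - s) ≤ δ * 1 :=
          mul_le_mul (by linarith) (by linarith) (by linarith) hδpos.le
        have e2 : (δ - β) * (1 - s) * s ≤ δ * 1 * s :=
          mul_le_mul_of_nonneg_right e1 hspos.le
        nlinarith [mul_pos hδpos hspos]
      rw [hydef]
      linarith
    obtain ⟨n, hn⟩ := exists_pow_lt_of_lt_one (show (0:ℝ) < δ - β by linarith) hβ1
    obtain ⟨x, hx, hxy, hgap⟩ := Gamma_dense_aux hN hβ0 hβ' n y hy0 hy1
    have hgap' : y - x < δ - β := by
      rcases hgap with h | h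
      · exact h
      · linarith
    have hsx : s * x ∈ Gamma N β := hs x hx
    have hup : s * x < δ := by
      have : x ≤ y := hxy
      have : s * x ≤ s * y := by nlinarith
      have hsy : s * y = δ - s * η := by rw [hydef]; field_simp
      nlinarith
    have hlow : β < s * x := by
      have hxlow : x > δ / s - η - (δ - β) := by
        have : y - x < δ - β := hgap'
        rw [hydef] at this
        linarith
      have h1 : s * x > s * (δ / s - η - (δ - β)) := by nlinarith
      have h2 : s * (δ / s - η - (δ - β)) = δ - s * η - s * (δ - β) := by
        field_simp
      have h3 : s * η = (δ - β) * (1 - s) / 2 := by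
        rw [hηdef]; field_simp
      have h4 : δ - s * η - s * (δ - β) ≥ β := by
        rw [h3]
        nlinarith
      linarith
    have := Gamma_gap hN hβ0 hβ1 hsx hup
    linarith

end Aux

/-- Suppose `0 < β < 1/(2N+1)` and `t = (t_0,…,t_m)` with `0 = t_0 < ⋯ < t_m`.
If `r·Γ_t ⊆ Γ_t` with `0 < r < 1`, then `r = β^q` for some `q ∈ ℤ_+`. -/
theorem stmt9 (N : ℕ) (hN : 0 < N) (β : ℝ) (hβ0 : 0 < β) (hβ1 : β < 1 / (2 * N + 1))
    (m : ℕ) (t : Fin (m + 1) → ℝ) (ht0 : t 0 = 0) (hmono : StrictMono t)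
    (r : ℝ) (hr0 : 0 < r) (hr1 : r < 1)
    (h : ∀ x ∈ GammaT N β t, r * x ∈ GammaT N β t) :
    ∃ q : ℕ, 1 ≤ q ∧ r = β ^ q := by
  have hNpos : (0:ℝ) < N := by exact_mod_cast hN
  have h2N : (0:ℝ) < 2 * N + 1 := by positivity
  have hβ2N : β * (2 * N + 1) < 1 := by
    have := (lt_div_iff₀ h2N).mp hβ1
    linarith
  have hβ' : ((N:ℝ) + 1) * β < 1 := by nlinarith
  have hβlt1 : β < 1 := by nlinarith
  -- Γ ⊆ Γ_t
  have hΓsub : ∀ x ∈ Gamma N β, x ∈ GammaT N β t := by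
    intro x hx
    exact Set.mem_iUnion.2 ⟨0, ⟨x, hx, by rw [ht0]; ring⟩⟩
  -- small elements of Γ_t lie in Γ
  have hsmall : ∀ x ∈ GammaT N β t, (∀ j : Fin (m+1), j ≠ 0 → x < t j) → x ∈ Gamma N β := by
    intro x hx hlt
    simp only [GammaT, Set.mem_iUnion, Set.mem_image] at hx
    obtain ⟨j, y, hy, hyx⟩ := hx
    by_cases hj : j = 0
    · subst hj
      rw [ht0, add_zero] at hyx
      rwa [← hyx]
    · exfalso
      have hy0 := Gamma_nonneg hN hβ0 hβlt1 hy
      have := hlt j hj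
      linarith [hyx ▸ (by linarith : t j ≤ y + t j)]
  -- a uniform positive lower bound for the nonzero translations
  have hft : ∀ j : Fin (m+1), 0 < (if j = 0 then 1 else t j) := by
    intro j
    split
    · norm_num
    · next hj =>
      have : (0 : Fin (m+1)) < j := Fin.pos_of_ne_zero hj
      have := hmono this
      rw [ht0] at this
      exact this
  set ε : ℝ := Finset.univ.inf' Finset.univ_nonempty (fun j : Fin (m+1) =>
    if j = 0 then 1 else t j) with hεdef
  have hε0 : 0 < ε := by
    rw [hεdef, Finset.lt_inf'_iff]
    intro j _
    exact hft j
  have hεle : ∀ j : Fin (m+1), j ≠ 0 → ε ≤ t j := by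
    intro j hj
    have h1 := Finset.inf'_le (fun j : Fin (m+1) => if j = 0 then 1 else t j)
      (Finset.mem_univ j)
    rw [if_neg hj] at h1
    exact h1
  -- multiplication by β preserves Γ
  have hβmul : ∀ x ∈ Gamma N β, β * x ∈ Gamma N β := by
    intro x hx
    have := prepend_mem_Gamma hN hβ0 hβlt1 hx (Nat.zero_le N)
    simpa using this
  have hβpow : ∀ (k : ℕ), ∀ x ∈ Gamma N β, β ^ k * x ∈ Gamma N β := by
    intro k
    induction k with
    | zero => intro x hx; simpa using hx
    | succ k ih =>
      intro x hx
      have := hβmul x hx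
      have h2 := ih (β * x) this
      have : β ^ (k+1) * x = β ^ k * (β * x) := by ring
      rwa [this]
  -- choose k with r β^k < ε
  obtain ⟨k, hk⟩ := exists_pow_lt_of_lt_one hε0 hβlt1
  set s₀ : ℝ := r * β ^ k with hs₀def
  have hβkpos : 0 < β ^ k := by positivity
  have hβk1 : β ^ k ≤ 1 := pow_le_one₀ hβ0.le hβlt1.le
  have hs₀pos : 0 < s₀ := by rw [hs₀def]; positivity
  have hs₀lt1 : s₀ < 1 := by
    rw [hs₀def]
    nlinarith
  have hs₀Γ : ∀ x ∈ Gamma N β, s₀ * x ∈ Gamma N β := by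
    intro x hx
    have hx0 := Gamma_nonneg hN hβ0 hβlt1 hx
    have hx1 := Gamma_le_one hN hβ0 hβlt1 hx
    have h1 : β ^ k * x ∈ Gamma N β := hβpow k x hx
    have h2 := h (β ^ k * x) (hΓsub _ h1)
    have h3 : r * (β ^ k * x) ∈ Gamma N β := by
      apply hsmall _ h2
      intro j hj
      have h4 : r * (β ^ k * x) < ε := by nlinarith
      exact lt_of_lt_of_le h4 (hεle j hj)
    have : s₀ * x = r * (β ^ k * x) := by rw [hs₀def]; ring
    rwa [this]
  -- choose the critical exponent j : β^(j+1) < s₀ ≤ β^j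
  have hex : ∃ n, β ^ n < s₀ := exists_pow_lt_of_lt_one hs₀pos hβlt1
  set n₀ := Nat.find hex with hn₀def
  have hn₀spec : β ^ n₀ < s₀ := Nat.find_spec hex
  have hn₀pos : 1 ≤ n₀ := by
    rcases Nat.eq_zero_or_pos n₀ with h0 | h0
    · rw [h0] at hn₀spec
      simp at hn₀spec
      linarith
    · exact h0
  set j := n₀ - 1 with hjdef
  have hj1 : s₀ ≤ β ^ j := by
    have : ¬ (β ^ j < s₀) := Nat.find_min hex (by omega)
    linarith [not_lt.mp this]
  have hj2 : β ^ (j + 1) < s₀ := by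
    have : j + 1 = n₀ := by omega
    rw [this]; exact hn₀spec
  have hβjpos : 0 < β ^ j := by positivity
  set ρ : ℝ := s₀ / β ^ j with hρdef
  have hρΓ : ∀ x ∈ Gamma N β, ρ * x ∈ Gamma N β := by
    intro x hx
    have hx1 := Gamma_le_one hN hβ0 hβlt1 hx
    have hx0 := Gamma_nonneg hN hβ0 hβlt1 hx
    have h1 : s₀ * x ∈ Gamma N β := hs₀Γ x hx
    have h2 : s₀ * x ≤ β ^ j := by nlinarith
    obtain ⟨y, hy, heq⟩ := Gamma_div_pow hN hβ0 hβ' j (s₀ * x) h1 h2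
    have : ρ * x = y := by
      rw [hρdef]
      field_simp
      linear_combination heq
    rwa [this]
  have hρβ : β < ρ := by
    rw [hρdef, lt_div_iff₀ hβjpos]
    calc β * β ^ j = β ^ (j + 1) := by ring
      _ < s₀ := hj2
  have hρ1 : ρ ≤ 1 := by
    rw [hρdef, div_le_one hβjpos]
    exact hj1
  have hρeq : ρ = 1 := rigidity hN hβ0 hβ' hρΓ hρβ hρ1
  have hs₀eq : s₀ = β ^ j := by
    have := hρeq
    rw [hρdef, div_eq_one_iff_eq hβjpos.ne'] at this
    exact this
  -- conclude : r β^k = β^j with k < j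
  have hkj : k < j := by
    by_contra hle
    push_neg at hle
    have h4 : β ^ k = β ^ j * β ^ (k - j) := by
      rw [← pow_add]
      congr 1
      omega
    have h5 : β ^ k ≤ β ^ j := by
      rw [h4]
      nlinarith [pow_le_one₀ hβ0.le hβlt1.le (n := k - j), pow_nonneg hβ0.le (k - j),
        pow_nonneg hβ0.le j]
    rw [hs₀def] at hs₀eq
    nlinarith
  refine ⟨j - k, by omega, ?_⟩
  have hsplit : β ^ j = β ^ k * β ^ (j - k) := by
    rw [← pow_add]
    congr 1
    omega
  rw [hs₀def, hsplit] at hs₀eq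
  have := mul_right_cancel₀ hβkpos.ne' (by linarith [hs₀eq] : r * β ^ k = β ^ (j - k) * β ^ k)
  linarith [this]

end HSCantor
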